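/- Let δ be a valley-free range map and S a graded subset of Cl_δ that is closed by prefix and closed by suffix reduction. Assume that at least one of the following holds: (i) for every n ≥ 0, S(n) is a sublattice of Cl_δ(n) (closed under componentwise minimum and maximum); or (ii) for every n ≥ 0, S(n) is closed under componentwise minimum, S is maximally extendable, and S(n) is join-stable, meaning that any two u, v ∈ S(n) have a least upper bound u ∨' v in S(n) and u_i = v_i for some i ∈ [n] implies (u ∨' v)_i = u_i. Then for all u, v ∈ S, the set P := {uv' : v' ∈ ℕ^{|v|}, r_δ(v') = v, uv' ∈ S} is either empty or an interval of the poset S(|u|+|v|): there exist a, b ∈ P such that P = {w ∈ S(|u|+|v|) : a ≼ w ≼ b}. -/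

import Mathlib

/-- Componentwise order on words of natural numbers of the same length. -/
def wle (u v : List ℕ) : Prop := List.Forall₂ (· ≤ ·) u v

/-- Strict componentwise order. -/
def wlt (u v : List ℕ) : Prop := wle u v ∧ u ≠ v

/-- `u` is a `δ`-cliff: the letter at (0-indexed) position `i` is at most `δ i`.
(The range map is 0-indexed: `δ i` is the bound of the `(i+1)`-st letter.) -/
def IsCliff (δ : ℕ → ℕ) (u : List ℕ) : Prop := ∀ i < u.length, u.getD i 0 ≤ δ i

def ClosedByPrefix (S : Set (List ℕ)) : Prop := ∀ u v : List ℕ, u ++ v ∈ S → u ∈ S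

def MinExtendable (S : Set (List ℕ)) : Prop := [] ∈ S ∧ ∀ u ∈ S, u ++ [0] ∈ S

def MaxExtendable (δ : ℕ → ℕ) (S : Set (List ℕ)) : Prop :=
  [] ∈ S ∧ ∀ u ∈ S, u ++ [δ u.length] ∈ S

/-- `v` covers `u` in the subposet `S` (componentwise order on words of equal length). -/
def CoversIn (S : Set (List ℕ)) (u v : List ℕ) : Prop :=
  u ∈ S ∧ v ∈ S ∧ wlt u v ∧ ¬ ∃ w ∈ S, wlt u w ∧ wlt w v

/-- Auxiliary for the decrementation map: input is the reversed word. -/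
noncomputable def decrAux (S : Set (List ℕ)) : List ℕ → List ℕ
  | [] => []
  | a :: r => decrAux S r ++ [sSup {b | b ≤ a ∧ decrAux S r ++ [b] ∈ S}]

/-- The `S`-decrementation map. -/
noncomputable def decr (S : Set (List ℕ)) (u : List ℕ) : List ℕ := decrAux S u.reverse

/-- Auxiliary for the incrementation map: input is the reversed word. -/
noncomputable def incrAux (δ : ℕ → ℕ) (S : Set (List ℕ)) : List ℕ → List ℕ
  | [] => []
  | a :: r => incrAux δ S r ++
      [sInf {b | a ≤ b ∧ b ≤ δ r.length ∧ incrAux δ S r ++ [b] ∈ S}]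

/-- The `S`-incrementation map. -/
noncomputable def incr (δ : ℕ → ℕ) (S : Set (List ℕ)) (u : List ℕ) : List ℕ :=
  incrAux δ S u.reverse

/-- The `S`-elevation map. -/
noncomputable def elev (S : Set (List ℕ)) (u : List ℕ) : List ℕ :=
  (List.range u.length).map fun i =>
    Set.ncard {a : ℕ | a < u.getD i 0 ∧ u.take i ++ [a] ∈ S}

/-- A `δ`-hill: a weakly increasing `δ`-cliff. -/
def IsHill (δ : ℕ → ℕ) (u : List ℕ) : Prop :=
  IsCliff δ u ∧ List.Pairwise (· ≤ ·) u

/-- A `δ`-avalanche: a `δ`-cliff whose nonempty prefixes have small sums. -/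
def IsAval (δ : ℕ → ℕ) (u : List ℕ) : Prop :=
  IsCliff δ u ∧ ∀ k < u.length, (u.take (k + 1)).sum ≤ δ k

/-- A `δ`-canyon. -/
def IsCanyon (δ : ℕ → ℕ) (u : List ℕ) : Prop :=
  IsCliff δ u ∧ ∀ i < u.length, ∀ j, 1 ≤ j → j ≤ u.getD i 0 → j ≤ i →
    u.getD (i - j) 0 + j ≤ u.getD i 0

/-- The `δ`-reduction map. -/
def reduce (δ : ℕ → ℕ) (u : List ℕ) : List ℕ :=
  (List.range u.length).map fun i => min (u.getD i 0) (δ i)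

/-- `δ` is valley-free. -/
def ValleyFree (δ : ℕ → ℕ) : Prop :=
  ¬ ∃ i₁ i₂ i₃ : ℕ, i₁ < i₂ ∧ i₂ < i₃ ∧ δ i₂ < δ i₁ ∧ δ i₂ < δ i₃

/-- `S` is closed by suffix reduction: the `δ`-reduction of any suffix of a word of
`S` belongs to `S`. -/
def ClosedBySuffixReduction (δ : ℕ → ℕ) (S : Set (List ℕ)) : Prop :=
  ∀ u ∈ S, ∀ k ≤ u.length, reduce δ (u.drop k) ∈ S

/-- `S(n)` is join-stable: any `u, v ∈ S(n)` have a least upper bound `j` in `S(n)`,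
and `u_i = v_i` implies `j_i = u_i`. -/
def JoinStable (S : Set (List ℕ)) : Prop :=
  ∀ u ∈ S, ∀ v ∈ S, u.length = v.length →
    ∃ j ∈ S, wle u j ∧ wle v j ∧ (∀ w ∈ S, wle u w → wle v w → wle j w) ∧
      ∀ i < u.length, u.getD i 0 = v.getD i 0 → j.getD i 0 = u.getD i 0


section Stmt19Aux

lemma wle_iff {x y : List ℕ} :
    wle x y ↔ x.length = y.length ∧ ∀ i < x.length, x.getD i 0 ≤ y.getD i 0 := by
  constructor
  · intro h
    have hl := List.Forall₂.length_eq h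
    refine ⟨hl, fun i hi => ?_⟩
    rw [List.getD_eq_getElem _ _ hi, List.getD_eq_getElem _ _ (hl ▸ hi)]
    exact (List.forall₂_iff_get.1 h).2 i hi (hl ▸ hi)
  · rintro ⟨hl, h⟩
    refine List.forall₂_iff_get.2 ⟨hl, fun i h1 h2 => ?_⟩
    have := h i h1
    rwa [List.getD_eq_getElem _ _ h1, List.getD_eq_getElem _ _ h2] at this

lemma wle_sum {x y : List ℕ} (h : wle x y) : x.sum ≤ y.sum := by
  induction h with
  | nil => simp
  | cons hab ht ih => simp only [List.sum_cons]; omega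

lemma wle_eq {x y : List ℕ} (h : wle x y) (hs : y.sum ≤ x.sum) : x = y := by
  induction h with
  | nil => rfl
  | @cons a b l₁ l₂ hab ht ih =>
      have h1 := wle_sum ht
      simp only [List.sum_cons] at hs
      have hab' : a = b := by omega
      rw [hab', ih (by omega)]

lemma reduce_length (δ : ℕ → ℕ) (l : List ℕ) : (reduce δ l).length = l.length := by
  simp [reduce]

lemma reduce_getD (δ : ℕ → ℕ) (l : List ℕ) {i : ℕ} (hi : i < l.length) :
    (reduce δ l).getD i 0 = min (l.getD i 0) (δ i) := by
  rw [List.getD_eq_getElem _ _ (by simpa [reduce_length] using hi)]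
  simp [reduce]

lemma memP_iff (δ : ℕ → ℕ) (S : Set (List ℕ)) (u v w : List ℕ) :
    (∃ v' : List ℕ, w = u ++ v' ∧ reduce δ v' = v ∧ w ∈ S) ↔
    w ∈ S ∧ w.length = u.length + v.length ∧
      (∀ i < u.length, w.getD i 0 = u.getD i 0) ∧
      ∀ i < v.length, min (w.getD (u.length + i) 0) (δ i) = v.getD i 0 := by
  constructor
  · rintro ⟨v', rfl, hred, hS⟩
    have hlv : v'.length = v.length := by rw [← hred, reduce_length]
    refine ⟨hS, by simp [hlv], fun i hi => List.getD_append _ _ _ _ hi, fun i hi => ?_⟩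
    have h1 : (u ++ v').getD (u.length + i) 0 = v'.getD i 0 := by
      rw [List.getD_append_right _ _ _ _ (Nat.le_add_right _ _), Nat.add_sub_cancel_left]
    rw [h1, ← reduce_getD δ v' (by omega), hred]
  · rintro ⟨hS, hlen, hpre, hmin⟩
    refine ⟨w.drop u.length, ?_, ?_, hS⟩
    · conv_lhs => rw [← List.take_append_drop u.length w]
      congr 1
      apply List.ext_getElem (by simp [hlen])
      intro i h1 h2
      have hiu : i < u.length := by simpa [hlen] using h2
      rw [List.getElem_take]
      rw [← List.getD_eq_getElem w 0 (by omega), ← List.getD_eq_getElem u 0 hiu]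
      exact hpre i hiu
    · apply List.ext_getElem (by simp [reduce_length, hlen])
      intro i h1 h2
      have hil : i < (w.drop u.length).length := by simp [hlen]; omega
      rw [← List.getD_eq_getElem _ 0 h1, ← List.getD_eq_getElem _ 0 h2,
        reduce_getD δ _ hil, ← hmin i h2]
      congr 1
      rw [List.getD_eq_getElem _ 0 hil,
        List.getD_eq_getElem _ 0 (by omega : u.length + i < w.length)]
      simp [List.getElem_drop]

lemma finite_bdd (n : ℕ) (δ : ℕ → ℕ) :
    {l : List ℕ | l.length = n ∧ ∀ i < n, l.getD i 0 ≤ δ i}.Finite := by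
  have hsub : {l : List ℕ | l.length = n ∧ ∀ i < n, l.getD i 0 ≤ δ i} ⊆
      Set.range (fun f : (∀ i : Fin n, Fin (δ i + 1)) =>
        List.ofFn fun i => (f i : ℕ)) := by
    rintro l ⟨hl, hb⟩
    refine ⟨fun i => ⟨l.getD i 0, Nat.lt_succ_of_le (hb i i.2)⟩, ?_⟩
    apply List.ext_getElem (by simp [hl])
    intro i h1 h2
    simp only [List.getElem_ofFn]
    rw [← List.getD_eq_getElem l 0 h2]
  exact (Set.finite_range _).subset hsub

lemma getD_zipWith (f : ℕ → ℕ → ℕ) (x y : List ℕ) {i : ℕ}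
    (hx : i < x.length) (hy : i < y.length) :
    (List.zipWith f x y).getD i 0 = f (x.getD i 0) (y.getD i 0) := by
  have h : i < (List.zipWith f x y).length := by
    rw [List.length_zipWith]; omega
  rw [List.getD_eq_getElem _ 0 h, List.getElem_zipWith,
    List.getD_eq_getElem x 0 hx, List.getD_eq_getElem y 0 hy]

lemma exists_top (P : Set (List ℕ)) (hfin : P.Finite) (hne : P.Nonempty)
    (hub : ∀ x ∈ P, ∀ y ∈ P, ∃ z ∈ P, wle x z ∧ wle y z) :
    ∃ b ∈ P, ∀ x ∈ P, wle x b := by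
  obtain ⟨b, hb, hmax⟩ :=
    Set.Finite.exists_maximalFor (fun l : List ℕ => l.sum) P hfin hne
  refine ⟨b, hb, fun x hx => ?_⟩
  obtain ⟨z, hz, hbz, hxz⟩ := hub b hb x hx
  have h1 := hmax hz (wle_sum hbz)
  have hbz' : b = z := wle_eq hbz (by omega)
  rwa [hbz']

lemma exists_bot (P : Set (List ℕ)) (hfin : P.Finite) (hne : P.Nonempty)
    (hlb : ∀ x ∈ P, ∀ y ∈ P, ∃ z ∈ P, wle z x ∧ wle z y) :
    ∃ a ∈ P, ∀ x ∈ P, wle a x := by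
  obtain ⟨a, ha, hmin⟩ :=
    Set.Finite.exists_minimalFor (fun l : List ℕ => l.sum) P hfin hne
  refine ⟨a, ha, fun x hx => ?_⟩
  obtain ⟨z, hz, hza, hzx⟩ := hlb a ha x hx
  have h1 := hmin hz (wle_sum hza)
  have hza' : z = a := wle_eq hza (by omega)
  rwa [← hza']

end Stmt19Aux

/-- Let `δ` be valley-free and `S` a graded subset of `Cl_δ` closed
by prefix and by suffix reduction, such that either (i) every `S(n)` is a sublattice
of `Cl_δ(n)`, or (ii) every `S(n)` is a meet semi-sublattice of `Cl_δ(n)`, `S` is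
maximally extendable, and every `S(n)` is join-stable. Then for all `u, v ∈ S`, the
set `{u v' : r_δ(v') = v, u v' ∈ S}` is empty or an interval of the poset
`S(|u| + |v|)`. -/
theorem stmt19 (δ : ℕ → ℕ) (hvf : ValleyFree δ) (S : Set (List ℕ))
    (hgr : ∀ u ∈ S, IsCliff δ u) (hpre : ClosedByPrefix S)
    (hsuf : ClosedBySuffixReduction δ S)
    (hcase :
      (∀ u ∈ S, ∀ v ∈ S, u.length = v.length →
        List.zipWith min u v ∈ S ∧ List.zipWith max u v ∈ S) ∨
      ((∀ u ∈ S, ∀ v ∈ S, u.length = v.length → List.zipWith min u v ∈ S) ∧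
        MaxExtendable δ S ∧ JoinStable S))
    (u v : List ℕ) (hu : u ∈ S) (hv : v ∈ S) :
    {w | ∃ v' : List ℕ, w = u ++ v' ∧ reduce δ v' = v ∧ w ∈ S} = ∅ ∨
    ∃ a ∈ {w | ∃ v' : List ℕ, w = u ++ v' ∧ reduce δ v' = v ∧ w ∈ S},
    ∃ b ∈ {w | ∃ v' : List ℕ, w = u ++ v' ∧ reduce δ v' = v ∧ w ∈ S},
      {w | ∃ v' : List ℕ, w = u ++ v' ∧ reduce δ v' = v ∧ w ∈ S}
        = {w | w ∈ S ∧ wle a w ∧ wle w b} := by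
  classical
  set P := {w | ∃ v' : List ℕ, w = u ++ v' ∧ reduce δ v' = v ∧ w ∈ S} with hPdef
  by_cases hne : P = ∅
  · left; exact hne
  right
  have hne' : P.Nonempty := Set.nonempty_iff_ne_empty.2 hne
  have hvc : ∀ i < v.length, v.getD i 0 ≤ δ i := hgr v hv
  have hchar : ∀ w, w ∈ P ↔ w ∈ S ∧ w.length = u.length + v.length ∧
      (∀ i < u.length, w.getD i 0 = u.getD i 0) ∧
      ∀ i < v.length, min (w.getD (u.length + i) 0) (δ i) = v.getD i 0 :=
    fun w => memP_iff δ S u v w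
  have hfin : P.Finite := by
    apply (finite_bdd (u.length + v.length) δ).subset
    intro w hw
    obtain ⟨hwS, hwl, -, -⟩ := (hchar w).1 hw
    exact ⟨hwl, fun i hi => hgr w hwS i (by omega)⟩
  have hminS : ∀ x ∈ S, ∀ y ∈ S, x.length = y.length → List.zipWith min x y ∈ S := by
    rcases hcase with h | h
    · exact fun x hx y hy hl => (h x hx y hy hl).1
    · exact h.1
  have hlb : ∀ x ∈ P, ∀ y ∈ P, ∃ z ∈ P, wle z x ∧ wle z y := by
    intro x hx y hy
    obtain ⟨hxS, hxl, hxp, hxm⟩ := (hchar x).1 hx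
    obtain ⟨hyS, hyl, hyp, hym⟩ := (hchar y).1 hy
    have hzl : (List.zipWith min x y).length = u.length + v.length := by
      rw [List.length_zipWith]; omega
    refine ⟨List.zipWith min x y,
      (hchar _).2 ⟨hminS x hxS y hyS (by omega), hzl, ?_, ?_⟩, ?_, ?_⟩
    · intro i hi
      rw [getD_zipWith min x y (by omega) (by omega)]
      have := hxp i hi; have := hyp i hi; omega
    · intro i hi
      rw [getD_zipWith min x y (by omega) (by omega)]
      have := hxm i hi; have := hym i hi; omega
    · refine wle_iff.2 ⟨by omega, fun i hi => ?_⟩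
      rw [getD_zipWith min x y (by omega) (by omega)]; omega
    · refine wle_iff.2 ⟨by omega, fun i hi => ?_⟩
      rw [getD_zipWith min x y (by omega) (by omega)]; omega
  have hub : ∀ x ∈ P, ∀ y ∈ P, ∃ z ∈ P, wle x z ∧ wle y z := by
    intro x hx y hy
    obtain ⟨hxS, hxl, hxp, hxm⟩ := (hchar x).1 hx
    obtain ⟨hyS, hyl, hyp, hym⟩ := (hchar y).1 hy
    rcases hcase with h | ⟨-, -, hjs⟩
    · have hzl : (List.zipWith max x y).length = u.length + v.length := by
        rw [List.length_zipWith]; omega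
      refine ⟨List.zipWith max x y,
        (hchar _).2 ⟨(h x hxS y hyS (by omega)).2, hzl, ?_, ?_⟩, ?_, ?_⟩
      · intro i hi
        rw [getD_zipWith max x y (by omega) (by omega)]
        have := hxp i hi; have := hyp i hi; omega
      · intro i hi
        rw [getD_zipWith max x y (by omega) (by omega)]
        have := hxm i hi; have := hym i hi; have := hvc i hi; omega
      · refine wle_iff.2 ⟨by omega, fun i hi => ?_⟩
        rw [getD_zipWith max x y (by omega) (by omega)]; omega
      · refine wle_iff.2 ⟨by omega, fun i hi => ?_⟩
        rw [getD_zipWith max x y (by omega) (by omega)]; omega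
    · obtain ⟨j, hjS, hxj, hyj, -, hagree⟩ := hjs x hxS y hyS (by omega)
      have hjl : x.length = j.length := (wle_iff.1 hxj).1
      have hxj' := (wle_iff.1 hxj).2
      have hyj' := (wle_iff.1 hyj).2
      refine ⟨j, (hchar j).2 ⟨hjS, by omega, ?_, ?_⟩, hxj, hyj⟩
      · intro i hi
        rw [hagree i (by omega) (by rw [hxp i hi, hyp i hi])]
        exact hxp i hi
      · intro i hi
        have hxi := hxm i hi
        have hyi := hym i hi
        have h1 := hxj' (u.length + i) (by omega)
        have h2 := hyj' (u.length + i) (by omega)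
        have hvd := hvc i hi
        by_cases hc : x.getD (u.length + i) 0 = y.getD (u.length + i) 0
        · have := hagree (u.length + i) (by omega) hc
          omega
        · omega
  obtain ⟨a, haP, hbot⟩ := exists_bot P hfin hne' hlb
  obtain ⟨b, hbP, htop⟩ := exists_top P hfin hne' hub
  refine ⟨a, haP, b, hbP, ?_⟩
  ext w
  simp only [Set.mem_setOf_eq]
  constructor
  · intro hw
    exact ⟨((hchar w).1 hw).1, hbot w hw, htop w hw⟩
  · rintro ⟨hwS, haw, hwb⟩
    obtain ⟨-, hal, hap, ham⟩ := (hchar a).1 haP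
    obtain ⟨-, hbl, hbp, hbm⟩ := (hchar b).1 hbP
    have hal' := wle_iff.1 haw
    have hbl' := wle_iff.1 hwb
    refine (hchar w).2 ⟨hwS, by omega, ?_, ?_⟩
    · intro i hi
      have h1 := hal'.2 i (by omega)
      have h2 := hbl'.2 i (by omega)
      have := hap i hi; have := hbp i hi; omega
    · intro i hi
      have h1 := hal'.2 (u.length + i) (by omega)
      have h2 := hbl'.2 (u.length + i) (by omega)
      have := ham i hi; have := hbm i hi; omega
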